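/- Gradient reformulation: for profiles x, x' in a polymatrix game, the one-sided directional derivative Df(x, x') := lim_{ε→0⁺} (f((1−ε)x + εx') − f(x))/ε exists and equals max_{i ∈ K(x)} Df_i(x, x') − f(x), where K(x) is the set of players attaining maximum regret and Df_i(x,x') = max_{k ∈ Br_i(x)}(u_i^s(x'))_k − u_i(x_i, x') − u_i(x'_i, x) + u_i(x_i, x). -/

import Mathlib

open Finset
open scoped Classical

noncomputable section

/-- maximum of `v` over a finset `S` (junk value `0` if `S` is empty). -/
noncomputable def finMaxOn {α : Type*} (S : Finset α) (v : α → ℝ) : ℝ :=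
  if h : S.Nonempty then S.sup' h v else 0

/-- minimum of `v` over a finset `S` (junk value `0` if `S` is empty). -/
noncomputable def finMinOn {α : Type*} (S : Finset α) (v : α → ℝ) : ℝ :=
  if h : S.Nonempty then S.inf' h v else 0

section Polymatrix

variable {n : ℕ} (m : Fin n → ℕ) (N : Fin n → Finset (Fin n))
  (A : ∀ i j : Fin n, Matrix (Fin (m i)) (Fin (m j)) ℝ)

/-- vector of pure-strategy payoffs of player `i` against profile `x`:
`u_i^s(x) = Σ_{j ∈ N(i)} A_ij x_j`. -/
def usVec (i : Fin n) (x : ∀ j, Fin (m j) → ℝ) : Fin (m i) → ℝ :=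
  fun k => ∑ j ∈ N i, ∑ q, A i j k q * x j q

/-- payoff to player `i` from playing the (possibly formal) strategy `y`
against profile `x`: `u_i(y, x) = yᵀ u_i^s(x)`. -/
def payTo (i : Fin n) (y : Fin (m i) → ℝ) (x : ∀ j, Fin (m j) → ℝ) : ℝ :=
  ∑ k, y k * usVec m N A i x k

/-- payoff of player `i` under profile `x`. -/
def payoff (i : Fin n) (x : ∀ j, Fin (m j) → ℝ) : ℝ := payTo m N A i (x i) x

/-- best-response payoff of player `i` against `x`. -/
def brp (i : Fin n) (x : ∀ j, Fin (m j) → ℝ) : ℝ := finMaxOn univ (usVec m N A i x)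

/-- pure best responses of player `i` against `x`. -/
def brSet (i : Fin n) (x : ∀ j, Fin (m j) → ℝ) : Finset (Fin (m i)) :=
  univ.filter fun k => ∀ l, usVec m N A i x l ≤ usVec m N A i x k

/-- `δ`-best responses of player `i` against `x`. -/
def brdSet (δ : ℝ) (i : Fin n) (x : ∀ j, Fin (m j) → ℝ) : Finset (Fin (m i)) :=
  univ.filter fun k => brp m N A i x - δ ≤ usVec m N A i x k

/-- regret of player `i` under `x`: `f_i(x)`. -/
def regret (i : Fin n) (x : ∀ j, Fin (m j) → ℝ) : ℝ :=
  brp m N A i x - payoff m N A i x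

/-- maximum regret `f(x) = max_i f_i(x)`. -/
def maxRegret (x : ∀ j, Fin (m j) → ℝ) : ℝ := finMaxOn univ fun i => regret m N A i x

/-- set of players with maximum regret `K(x)`. -/
def Kset (x : ∀ j, Fin (m j) → ℝ) : Finset (Fin n) :=
  univ.filter fun i => regret m N A i x = maxRegret m N A x

/-- `Df_i^δ(x, x')`. -/
def Dfd (δ : ℝ) (i : Fin n) (x x' : ∀ j, Fin (m j) → ℝ) : ℝ :=
  finMaxOn (brdSet m N A δ i x) (usVec m N A i x')
    - payTo m N A i (x i) x' - payTo m N A i (x' i) x + payTo m N A i (x i) x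

/-- `Df^δ(x, x') = max_{i ∈ K(x)} Df_i^δ(x, x') - f(x)`. -/
def DfdAll (δ : ℝ) (x x' : ∀ j, Fin (m j) → ℝ) : ℝ :=
  finMaxOn (Kset m N A x) (fun i => Dfd m N A δ i x x') - maxRegret m N A x

/-- `Df_i(x, x')` (with exact best responses). -/
def Dfbr (i : Fin n) (x x' : ∀ j, Fin (m j) → ℝ) : ℝ :=
  finMaxOn (brSet m N A i x) (usVec m N A i x')
    - payTo m N A i (x i) x' - payTo m N A i (x' i) x + payTo m N A i (x i) x

/-- the profile `(1-ε)x + εx'`. -/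
def mix (x x' : ∀ j, Fin (m j) → ℝ) (ε : ℝ) : ∀ j, Fin (m j) → ℝ :=
  fun j => (1 - ε) • x j + ε • x' j

/-- `Λ_i^δ(x, x', ε)`; if the complement of the `δ`-best-response set is empty
the inner maximum is `-∞`, i.e. `Λ_i^δ = 0`. -/
def Lamd (δ : ℝ) (i : Fin n) (x x' : ∀ j, Fin (m j) → ℝ) (ε : ℝ) : ℝ :=
  if _h : ((brdSet m N A δ i x)ᶜ).Nonempty then
    max 0 (finMaxOn (brdSet m N A δ i x)ᶜ (usVec m N A i (mix m x x' ε))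
         - finMaxOn (brdSet m N A δ i x) (usVec m N A i (mix m x x' ε)))
  else 0

/-- `Λ_i(x, x', ε)` (with exact best responses). -/
def LamBr (i : Fin n) (x x' : ∀ j, Fin (m j) → ℝ) (ε : ℝ) : ℝ :=
  if _h : ((brSet m N A i x)ᶜ).Nonempty then
    max 0 (finMaxOn (brSet m N A i x)ᶜ (usVec m N A i (mix m x x' ε))
         - finMaxOn (brSet m N A i x) (usVec m N A i (mix m x x' ε)))
  else 0

/-- `x` is a mixed strategy profile. -/
def isProfile (x : ∀ j, Fin (m j) → ℝ) : Prop :=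
  ∀ j, x j ∈ stdSimplex ℝ (Fin (m j))

/-- the game is normalized: all pure-strategy payoffs of every player lie in
`[0,1]` against every mixed profile. -/
def normalized : Prop :=
  ∀ i (x : ∀ j, Fin (m j) → ℝ), isProfile m x →
    ∀ k, usVec m N A i x k ∈ Set.Icc (0:ℝ) 1

/-!
`f` is a finite maximum of the regrets `f_i`, and `f_i` is the maximum of the affine functions
`ε ↦ (u_i^s(x_ε))_k`, minus the quadratic function `ε ↦ u_i(x_ε)`. The one-sided Danskin rule
(the right derivative of a finite maximum is the maximum of the right derivatives over the indices
active at `0`) is applied twice: over the strategies `k`, where the active ones are `Br_i(x)`, and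
over the players `i`, where the active ones are `K(x)`.
-/

open Filter Topology

section FinMaxOn

variable {α β : Type*} {S : Finset α}

def argmaxOn (S : Finset α) (v : α → ℝ) : Finset α :=
  S.filter fun a => v a = finMaxOn S v

lemma finMaxOn_of_nonempty (hS : S.Nonempty) (v : α → ℝ) : finMaxOn S v = S.sup' hS v :=
  dif_pos hS

lemma finMaxOn_empty (v : α → ℝ) : finMaxOn (∅ : Finset α) v = 0 :=
  dif_neg Finset.not_nonempty_empty

lemma argmaxOn_empty (v : α → ℝ) : argmaxOn (∅ : Finset α) v = ∅ :=
  filter_empty _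

lemma le_finMaxOn {v : α → ℝ} {a : α} (ha : a ∈ S) : v a ≤ finMaxOn S v := by
  rw [finMaxOn_of_nonempty ⟨a, ha⟩]
  exact le_sup' v ha

lemma eq_finMaxOn_iff {v : α → ℝ} {a : α} (ha : a ∈ S) :
    v a = finMaxOn S v ↔ ∀ b ∈ S, v b ≤ v a := by
  rw [finMaxOn_of_nonempty ⟨a, ha⟩]
  exact ⟨fun h b hb => h ▸ le_sup' v hb,
    fun h => le_antisymm (le_sup' v ha) (sup'_le _ _ h)⟩

lemma mem_argmaxOn {v : α → ℝ} {a : α} : a ∈ argmaxOn S v ↔ a ∈ S ∧ v a = finMaxOn S v :=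
  mem_filter

lemma argmaxOn_subset (S : Finset α) (v : α → ℝ) : argmaxOn S v ⊆ S :=
  filter_subset _ S

lemma argmaxOn_nonempty (hS : S.Nonempty) (v : α → ℝ) : (argmaxOn S v).Nonempty := by
  obtain ⟨a, ha, h⟩ := exists_mem_eq_sup' hS v
  exact ⟨a, mem_argmaxOn.2 ⟨ha, by rw [finMaxOn_of_nonempty hS, h]⟩⟩

lemma finMaxOn_congr {v w : α → ℝ} (h : ∀ a ∈ S, v a = w a) : finMaxOn S v = finMaxOn S w := by
  rcases S.eq_empty_or_nonempty with rfl | hS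
  · rw [finMaxOn_empty, finMaxOn_empty]
  rw [finMaxOn_of_nonempty hS, finMaxOn_of_nonempty hS]
  exact sup'_congr hS rfl h

lemma finMaxOn_sub_const (hS : S.Nonempty) (v : α → ℝ) (c : ℝ) :
    finMaxOn S (fun a => v a - c) = finMaxOn S v - c := by
  rw [finMaxOn_of_nonempty hS, finMaxOn_of_nonempty hS]
  exact (apply_sup'_eq_sup'_comp hS (· - c) fun u w => (max_sub_sub_right u w c).symm).symm

lemma finMaxOn_div_const (hS : S.Nonempty) (v : α → ℝ) {t : ℝ} (ht : 0 < t) :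
    finMaxOn S (fun a => v a / t) = finMaxOn S v / t := by
  rw [finMaxOn_of_nonempty hS, finMaxOn_of_nonempty hS]
  exact (apply_sup'_eq_sup'_comp hS (· / t) fun u w => (max_div_div_right ht.le u w).symm).symm

lemma finMaxOn_argmaxOn_sub (S : Finset α) (v w : α → ℝ) :
    finMaxOn (argmaxOn S w) (fun a => v a - w a) = finMaxOn (argmaxOn S w) v - finMaxOn S w := by
  rcases S.eq_empty_or_nonempty with rfl | hS
  · rw [argmaxOn_empty, finMaxOn_empty, finMaxOn_empty, finMaxOn_empty, sub_zero]
  rw [← finMaxOn_sub_const (argmaxOn_nonempty hS w)]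
  exact finMaxOn_congr fun a ha => by rw [(mem_argmaxOn.1 ha).2]

lemma Filter.Tendsto.finMaxOn {l : Filter β} {g : α → β → ℝ} {c : α → ℝ}
    (hg : ∀ a ∈ S, Tendsto (g a) l (𝓝 (c a))) :
    Tendsto (fun t => finMaxOn S (g · t)) l (𝓝 (finMaxOn S c)) := by
  rcases S.eq_empty_or_nonempty with rfl | hS
  · simp only [finMaxOn_empty, tendsto_const_nhds]
  simp only [finMaxOn_of_nonempty hS]
  exact Tendsto.finset_sup'_nhds_apply hS hg

lemma eventually_finMaxOn_eq_finMaxOn_argmaxOn {l : Filter β} {g : α → β → ℝ} {c : α → ℝ}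
    (hg : ∀ a ∈ S, Tendsto (g a) l (𝓝 (c a))) :
    ∀ᶠ t in l, finMaxOn S (g · t) = finMaxOn (argmaxOn S c) (g · t) := by
  rcases S.eq_empty_or_nonempty with rfl | hS
  · simp only [argmaxOn_empty, eventually_true]
  obtain ⟨a₀, ha₀⟩ := argmaxOn_nonempty hS c
  have ha₀S : a₀ ∈ S := argmaxOn_subset S c ha₀
  have hlt : ∀ᶠ t in l, ∀ a ∈ S, a ∉ argmaxOn S c → g a t < g a₀ t := by
    refine (eventually_all_finset S).2 fun a ha => ?_
    by_cases hamax : a ∈ argmaxOn S c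
    · exact Eventually.of_forall fun _ h => absurd hamax h
    have hca : c a < c a₀ := by
      rw [(mem_argmaxOn.1 ha₀).2]
      exact (le_finMaxOn ha).lt_of_ne fun h => hamax (mem_argmaxOn.2 ⟨ha, h⟩)
    filter_upwards [(hg a ha).eventually_lt (hg a₀ ha₀S) hca] with t ht _ using ht
  filter_upwards [hlt] with t ht
  rw [finMaxOn_of_nonempty hS, finMaxOn_of_nonempty ⟨a₀, ha₀⟩]
  refine le_antisymm (sup'_le _ _ fun a ha => ?_) (sup'_mono _ (argmaxOn_subset S c) _)
  by_cases hamax : a ∈ argmaxOn S c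
  · exact le_sup' (g · t) hamax
  · exact (ht a ha hamax).le.trans (le_sup' (g · t) ha₀)

lemma tendsto_of_tendsto_slope {g : ℝ → ℝ} {c D : ℝ}
    (h : Tendsto (fun ε => (g ε - c) / ε) (𝓝[>] 0) (𝓝 D)) : Tendsto g (𝓝[>] 0) (𝓝 c) := by
  have hlin : Tendsto (fun ε => c + ε * ((g ε - c) / ε)) (𝓝[>] 0) (𝓝 (c + 0 * D)) :=
    ((tendsto_nhdsWithin_of_tendsto_nhds tendsto_id).mul h).const_add c
  rw [zero_mul, add_zero] at hlin
  refine hlin.congr' ?_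
  filter_upwards [self_mem_nhdsWithin] with ε (hε : 0 < ε)
  rw [mul_div_cancel₀ _ hε.ne']
  ring

/-- One-sided Danskin rule for a finite maximum. -/
theorem tendsto_finMaxOn_slope {g : α → ℝ → ℝ} {c D : α → ℝ}
    (hd : ∀ a ∈ S, Tendsto (fun ε => (g a ε - c a) / ε) (𝓝[>] 0) (𝓝 (D a))) :
    Tendsto (fun ε => (finMaxOn S (g · ε) - finMaxOn S c) / ε) (𝓝[>] 0)
      (𝓝 (finMaxOn (argmaxOn S c) D)) := by
  rcases S.eq_empty_or_nonempty with rfl | hS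
  · simp only [argmaxOn_empty, finMaxOn_empty, sub_zero, zero_div, tendsto_const_nhds]
  have hmax := argmaxOn_nonempty hS c
  refine (Tendsto.finMaxOn fun a ha => hd a (argmaxOn_subset S c ha)).congr' ?_
  filter_upwards [eventually_finMaxOn_eq_finMaxOn_argmaxOn
      (fun a ha => tendsto_of_tendsto_slope (hd a ha)), self_mem_nhdsWithin]
    with ε hε (hpos : 0 < ε)
  rw [hε, ← finMaxOn_sub_const hmax, ← finMaxOn_div_const hmax _ hpos]
  exact finMaxOn_congr fun a ha => by rw [(mem_argmaxOn.1 ha).2]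

lemma tendsto_slope_of_sub_eq {g : ℝ → ℝ} {c a b : ℝ} (h : ∀ ε, g ε - c = ε * (a + ε * b)) :
    Tendsto (fun ε => (g ε - c) / ε) (𝓝[>] 0) (𝓝 a) := by
  have hlin : Tendsto (fun ε : ℝ => a + ε * b) (𝓝[>] 0) (𝓝 (a + 0 * b)) :=
    ((tendsto_nhdsWithin_of_tendsto_nhds tendsto_id).mul_const b).const_add a
  rw [zero_mul, add_zero] at hlin
  refine hlin.congr' ?_
  filter_upwards [self_mem_nhdsWithin] with ε (hε : 0 < ε)
  rw [h, mul_div_cancel_left₀ _ hε.ne']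

end FinMaxOn

section Slopes

variable (x x' : ∀ j, Fin (m j) → ℝ) (i : Fin n)

lemma usVec_mix (ε : ℝ) (k : Fin (m i)) :
    usVec m N A i (mix m x x' ε) k = (1 - ε) * usVec m N A i x k + ε * usVec m N A i x' k := by
  simp only [usVec, mix, Pi.add_apply, Pi.smul_apply, smul_eq_mul, mul_sum, ← sum_add_distrib]
  exact sum_congr rfl fun _ _ => sum_congr rfl fun _ _ => by ring

lemma payoff_mix (ε : ℝ) :
    payoff m N A i (mix m x x' ε)
      = (1 - ε) * (1 - ε) * payTo m N A i (x i) x + (1 - ε) * ε * payTo m N A i (x i) x'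
        + ε * (1 - ε) * payTo m N A i (x' i) x + ε * ε * payTo m N A i (x' i) x' := by
  simp only [payoff, payTo, mul_sum, ← sum_add_distrib]
  refine sum_congr rfl fun k _ => ?_
  rw [usVec_mix]
  simp only [mix, Pi.add_apply, Pi.smul_apply, smul_eq_mul]
  ring

lemma brSet_eq_argmaxOn : brSet m N A i x = argmaxOn univ (usVec m N A i x) :=
  filter_congr fun k hk => by rw [eq_finMaxOn_iff hk]; simp only [mem_univ, forall_const]

lemma tendsto_brp_slope :
    Tendsto (fun ε => (brp m N A i (mix m x x' ε) - brp m N A i x) / ε) (𝓝[>] 0)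
      (𝓝 (finMaxOn (brSet m N A i x) (usVec m N A i x') - brp m N A i x)) := by
  have hslope : ∀ k ∈ (univ : Finset (Fin (m i))),
      Tendsto (fun ε => (usVec m N A i (mix m x x' ε) k - usVec m N A i x k) / ε) (𝓝[>] 0)
        (𝓝 (usVec m N A i x' k - usVec m N A i x k)) :=
    fun k _ => tendsto_slope_of_sub_eq (b := 0) fun ε => by rw [usVec_mix]; ring
  have h := tendsto_finMaxOn_slope hslope
  rwa [finMaxOn_argmaxOn_sub, ← brp, ← brSet_eq_argmaxOn] at h

lemma tendsto_payoff_slope :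
    Tendsto (fun ε => (payoff m N A i (mix m x x' ε) - payoff m N A i x) / ε) (𝓝[>] 0)
      (𝓝 (payTo m N A i (x i) x' + payTo m N A i (x' i) x - 2 * payTo m N A i (x i) x)) :=
  tendsto_slope_of_sub_eq (b := payTo m N A i (x i) x - payTo m N A i (x i) x'
      - payTo m N A i (x' i) x + payTo m N A i (x' i) x')
    fun ε => by rw [payoff_mix, payoff]; ring

lemma tendsto_regret_slope :
    Tendsto (fun ε => (regret m N A i (mix m x x' ε) - regret m N A i x) / ε) (𝓝[>] 0)
      (𝓝 (Dfbr m N A i x x' - regret m N A i x)) := by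
  convert (tendsto_brp_slope m N A x x' i).sub (tendsto_payoff_slope m N A x x' i) using 2
  · simp only [regret]; ring
  · simp only [Dfbr, regret, payoff]; ring

end Slopes

theorem stmt13
    (x x' : ∀ j, Fin (m j) → ℝ) :
    Filter.Tendsto
      (fun ε : ℝ => (maxRegret m N A (mix m x x' ε) - maxRegret m N A x) / ε)
      (nhdsWithin 0 (Set.Ioi 0))
      (nhds (finMaxOn (Kset m N A x) (fun i => Dfbr m N A i x x')
              - maxRegret m N A x)) := by
  have h := tendsto_finMaxOn_slope fun i (_ : i ∈ univ) => tendsto_regret_slope m N A x x' i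
  rwa [finMaxOn_argmaxOn_sub] at h

end Polymatrix
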